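/- Let A ≥ 1, B ≥ 1, c > 0, and let (κ_n), (λ_n), (ξ_n), (η_n) be sequences of nonnegative integers with κ_n/n → 0, λ_n/n → 0, ξ_n/n → 0, η_n/n → 0. Let (g_n) be a sequence of complex numbers with g_0 ≠ 0, |g_n| ≤ B^{κ_n}·(1+t)^{λ_n} for all n, and A^{ξ_n}·(1+t)^{η_n}·|g_n| ≥ c for all sufficiently large n, where t ≥ 0 is fixed. Define h_n = (∑_{k=0}^n |g_k|²·t^{2k}) / (∑_{k=0}^n t^{2k}). Then lim_{n→∞} h_n^{1/n} = 1. -/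

import Mathlib

/-! The quotient is the mean of `‖g k‖ ^ 2` (`k ≤ n`) for the weights `t ^ (2 * k)`. Hence it is at
most `max_{k ≤ n} ‖g k‖ ^ 2 ≤ (B (1 + t)) ^ (2 max_{k ≤ n} (κ k + lam k))`, and at least
`‖g k‖ ^ 2 / (n + 1)` for the index `k ∈ {0, n}` of largest weight, which in turn is at least
`c₀ / ((n + 1) (A (1 + t)) ^ (2 (ξ n + η n)))` with `c₀ = min (‖g 0‖ ^ 2) (c ^ 2)`. All exponents
are `o(n)`, so the `n`-th roots of both bounds tend to `1`. -/

open Filter Finset Topology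

lemma tendsto_natCast_add_div_atTop {a b : ℕ → ℕ}
    (ha : Tendsto (fun n : ℕ => (a n : ℝ) / n) atTop (𝓝 0))
    (hb : Tendsto (fun n : ℕ => (b n : ℝ) / n) atTop (𝓝 0)) :
    Tendsto (fun n : ℕ => ((a n + b n : ℕ) : ℝ) / n) atTop (𝓝 0) := by
  simpa [add_div] using ha.add hb

lemma tendsto_sup_range_div_atTop {f : ℕ → ℕ}
    (hf : Tendsto (fun n : ℕ => (f n : ℝ) / n) atTop (𝓝 0)) :
    Tendsto (fun n : ℕ => (((range (n + 1)).sup f : ℕ) : ℝ) / n) atTop (𝓝 0) := by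
  refine tendsto_order.2 ⟨fun a ha => .of_forall fun n => ha.trans_le (by positivity),
    fun ε hε => ?_⟩
  obtain ⟨N, hN⟩ := eventually_atTop.1 (hf.eventually (gt_mem_nhds (half_pos hε)))
  set C := (range (N + 1)).sup f
  have hsup : ∀ n, (((range (n + 1)).sup f : ℕ) : ℝ) ≤ C + ε / 2 * n := by
    intro n
    obtain ⟨k, hk, hsup_eq⟩ := exists_mem_eq_sup (range (n + 1)) nonempty_range_add_one f
    have hkn : (k : ℝ) ≤ n := by exact_mod_cast Nat.lt_succ_iff.1 (mem_range.1 hk)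
    rw [hsup_eq]
    rcases le_or_gt k N with hkN | hNk
    · have hfk : (f k : ℝ) ≤ C := by
        exact_mod_cast le_sup (f := f) (mem_range.2 (Nat.lt_succ_of_le hkN))
      nlinarith
    · have hk0 : (0 : ℝ) < k := by exact_mod_cast (Nat.zero_le N).trans_lt hNk
      have hfk := (div_lt_iff₀ hk0).1 (hN k hNk.le)
      nlinarith
  filter_upwards [(tendsto_const_div_atTop_nhds_zero_nat (C : ℝ)).eventually
    (gt_mem_nhds (half_pos hε)), eventually_gt_atTop 0] with n hCn hn
  have hn : (0 : ℝ) < n := Nat.cast_pos.2 hn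
  calc (((range (n + 1)).sup f : ℕ) : ℝ) / n ≤ (C + ε / 2 * n) / n := by gcongr; exact hsup n
    _ = C / n + ε / 2 := by field_simp
    _ < ε := by linarith

lemma tendsto_pow_rpow_one_div_atTop {K : ℝ} (hK : 0 < K) {a : ℕ → ℕ}
    (ha : Tendsto (fun n : ℕ => (a n : ℝ) / n) atTop (𝓝 0)) :
    Tendsto (fun n : ℕ => (K ^ a n) ^ (1 / n : ℝ)) atTop (𝓝 1) := by
  have := ((Real.continuous_const_rpow hK.ne').tendsto 0).comp ha
  rw [Real.rpow_zero] at this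
  refine this.congr fun n => ?_
  rw [Function.comp_apply, ← Real.rpow_natCast, ← Real.rpow_mul hK.le, mul_one_div]

lemma tendsto_natCast_add_one_rpow_one_div :
    Tendsto (fun n : ℕ => ((n : ℝ) + 1) ^ (1 / n : ℝ)) atTop (𝓝 1) := by
  have := (tendsto_rpow_div_mul_add 1 1 (-1) one_ne_zero.symm).comp
    (tendsto_atTop_add_const_right atTop 1 tendsto_natCast_atTop_atTop)
  refine this.congr fun n => ?_
  norm_num

lemma tendsto_rpow_one_div_of_le_of_le {u : ℕ → ℝ} {c D M : ℝ} {d m : ℕ → ℕ}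
    (hc : 0 < c) (hD : 0 < D) (hM : 0 < M)
    (hd : Tendsto (fun n : ℕ => (d n : ℝ) / n) atTop (𝓝 0))
    (hm : Tendsto (fun n : ℕ => (m n : ℝ) / n) atTop (𝓝 0))
    (hlow : ∀ᶠ n in atTop, c / ((n + 1) * D ^ d n) ≤ u n) (hup : ∀ n, u n ≤ M ^ m n) :
    Tendsto (fun n : ℕ => u n ^ (1 / n : ℝ)) atTop (𝓝 1) := by
  have hlim : Tendsto (fun n : ℕ => (c / ((n + 1) * D ^ d n)) ^ (1 / n : ℝ)) atTop (𝓝 1) := by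
    have := (Real.continuous_const_rpow hc.ne').tendsto 0 |>.comp
      tendsto_one_div_atTop_nhds_zero_nat |>.div
      (tendsto_natCast_add_one_rpow_one_div.mul (tendsto_pow_rpow_one_div_atTop hD hd))
      (by norm_num)
    rw [Real.rpow_zero, mul_one, div_one] at this
    refine this.congr fun n => ?_
    rw [Pi.div_apply, Function.comp_apply, Real.div_rpow hc.le (by positivity),
      Real.mul_rpow (by positivity) (by positivity)]
  refine tendsto_of_tendsto_of_tendsto_of_le_of_le' hlim (tendsto_pow_rpow_one_div_atTop hM hm)
    ?_ ?_ <;> filter_upwards [hlow] with n hn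
  · exact Real.rpow_le_rpow (by positivity) hn (by positivity)
  · exact Real.rpow_le_rpow ((by positivity : (0 : ℝ) ≤ _).trans hn) (hup n) (by positivity)

lemma pow_mul_pow_le_mul_pow_add {x y : ℝ} (hx : 1 ≤ x) (hy : 1 ≤ y) (a b : ℕ) :
    x ^ a * y ^ b ≤ (x * y) ^ (a + b) := by
  rw [mul_pow]
  exact mul_le_mul (pow_le_pow_right₀ hx (Nat.le_add_right a b))
    (pow_le_pow_right₀ hy (Nat.le_add_left b a)) (by positivity) (by positivity)

lemma exists_pow_le_pow_of_nonneg {x : ℝ} (hx : 0 ≤ x) (n : ℕ) :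
    ∃ k, (k = 0 ∨ k = n) ∧ 0 < x ^ k ∧ ∀ j ≤ n, x ^ j ≤ x ^ k := by
  rcases le_total x 1 with hx1 | hx1
  · exact ⟨0, .inl rfl, by simp, fun j _ => by simpa using pow_le_one₀ hx hx1⟩
  · exact ⟨n, .inr rfl, by positivity, fun j hj => pow_le_pow_right₀ hx1 hj⟩

section WeightedMean

variable {ι : Type*} {s : Finset ι} {a w : ι → ℝ}

lemma sum_mul_div_sum_le {M : ℝ} (hM : 0 ≤ M) (ha : ∀ k ∈ s, a k ≤ M)
    (hw : ∀ k ∈ s, 0 ≤ w k) : (∑ k ∈ s, a k * w k) / ∑ k ∈ s, w k ≤ M :=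
  div_le_of_le_mul₀ (sum_nonneg hw) hM <| by
    rw [mul_sum]
    exact sum_le_sum fun k hk => mul_le_mul_of_nonneg_right (ha k hk) (hw k hk)

lemma div_card_le_sum_mul_div_sum (ha : ∀ j ∈ s, 0 ≤ a j) (hw : ∀ j ∈ s, 0 ≤ w j) {k : ι}
    (hk : k ∈ s) (hwk : 0 < w k) (hmax : ∀ j ∈ s, w j ≤ w k) :
    a k / #s ≤ (∑ j ∈ s, a j * w j) / ∑ j ∈ s, w j := by
  have hs : (0 : ℝ) < #s := by exact_mod_cast card_pos.2 ⟨k, hk⟩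
  calc a k / #s = a k * w k / (#s * w k) := (mul_div_mul_right _ _ hwk.ne').symm
    _ ≤ _ := by
      refine div_le_div₀ (sum_nonneg fun j hj => mul_nonneg (ha j hj) (hw j hj))
        (single_le_sum (f := fun j => a j * w j) (fun j hj => mul_nonneg (ha j hj) (hw j hj)) hk)
        (hwk.trans_le (single_le_sum hw hk)) ?_
      simpa using sum_le_card_nsmul s w (w k) hmax

end WeightedMean

lemma exists_div_le_sum_mul_pow_div_sum {a : ℕ → ℝ} (ha : ∀ k, 0 ≤ a k) (t : ℝ) (n : ℕ) :
    ∃ k, (k = 0 ∨ k = n) ∧ a k / (n + 1) ≤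
      (∑ k ∈ range (n + 1), a k * t ^ (2 * k)) / ∑ k ∈ range (n + 1), t ^ (2 * k) := by
  obtain ⟨k, hk, hpos, hmax⟩ := exists_pow_le_pow_of_nonneg (sq_nonneg t) n
  refine ⟨k, hk, ?_⟩
  have hcard : ((#(range (n + 1)) : ℕ) : ℝ) = n + 1 := by simp
  simp only [pow_mul] at hpos hmax ⊢
  rw [← hcard]
  exact div_card_le_sum_mul_div_sum (fun j _ => ha j) (fun _ _ => by positivity)
    (mem_range.2 (by omega)) hpos fun j hj => hmax j (Nat.lt_succ_iff.1 (mem_range.1 hj))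

theorem stmt_7 (A B c t : ℝ) (hA : 1 ≤ A) (hB : 1 ≤ B) (hc : 0 < c) (ht : 0 ≤ t)
    (κ lam ξ η : ℕ → ℕ)
    (hκ : Filter.Tendsto (fun n : ℕ => (κ n : ℝ) / n) Filter.atTop (nhds 0))
    (hlam : Filter.Tendsto (fun n : ℕ => (lam n : ℝ) / n) Filter.atTop (nhds 0))
    (hξ : Filter.Tendsto (fun n : ℕ => (ξ n : ℝ) / n) Filter.atTop (nhds 0))
    (hη : Filter.Tendsto (fun n : ℕ => (η n : ℝ) / n) Filter.atTop (nhds 0))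
    (g : ℕ → ℂ) (hg0 : g 0 ≠ 0)
    (hub : ∀ n, ‖g n‖ ≤ B ^ κ n * (1 + t) ^ lam n)
    (hlb : ∀ᶠ n in Filter.atTop, c ≤ A ^ ξ n * (1 + t) ^ η n * ‖g n‖) :
    Filter.Tendsto
      (fun n : ℕ =>
        ((∑ k ∈ Finset.range (n + 1), ‖g k‖ ^ 2 * t ^ (2 * k)) /
          (∑ k ∈ Finset.range (n + 1), t ^ (2 * k))) ^ (1 / n : ℝ))
      Filter.atTop (nhds 1) := by
  have ht1 : 1 ≤ 1 + t := by linarith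
  have hM : 1 ≤ B * (1 + t) := one_le_mul_of_one_le_of_one_le hB ht1
  have hD : 1 ≤ A * (1 + t) := one_le_mul_of_one_le_of_one_le hA ht1
  set c₀ := min (‖g 0‖ ^ 2) (c ^ 2)
  have hc₀ : 0 < c₀ := lt_min (by positivity) (by positivity)
  have hg_le (k : ℕ) : ‖g k‖ ≤ (B * (1 + t)) ^ (κ k + lam k) :=
    (hub k).trans (pow_mul_pow_le_mul_pow_add hB ht1 _ _)
  have hg_ge : ∀ᶠ n in atTop, ∀ k, (k = 0 ∨ k = n) →
      c₀ / ((A * (1 + t)) ^ 2) ^ (ξ n + η n) ≤ ‖g k‖ ^ 2 := by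
    filter_upwards [hlb] with n hn k hk
    rw [div_le_iff₀ (by positivity)]
    rcases hk with rfl | hk
    · exact (min_le_left _ _).trans
        (le_mul_of_one_le_right (by positivity) (one_le_pow₀ (one_le_pow₀ hD)))
    · rw [hk]
      have hcn := hn.trans (mul_le_mul_of_nonneg_right (pow_mul_pow_le_mul_pow_add hA ht1 _ _)
        (norm_nonneg _))
      calc c₀ ≤ c ^ 2 := min_le_right _ _
        _ ≤ ((A * (1 + t)) ^ (ξ n + η n) * ‖g n‖) ^ 2 := pow_le_pow_left₀ hc.le hcn 2
        _ = _ := by rw [mul_pow, pow_right_comm, mul_comm]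
  refine tendsto_rpow_one_div_of_le_of_le hc₀ (by positivity : 0 < (A * (1 + t)) ^ 2)
    (by positivity : 0 < (B * (1 + t)) ^ 2) (tendsto_natCast_add_div_atTop hξ hη)
    (tendsto_sup_range_div_atTop (tendsto_natCast_add_div_atTop hκ hlam)) ?_ fun n => ?_
  · filter_upwards [hg_ge] with n hn
    obtain ⟨k, hk, hmean⟩ := exists_div_le_sum_mul_pow_div_sum (fun k => sq_nonneg ‖g k‖) t n
    calc c₀ / ((n + 1) * ((A * (1 + t)) ^ 2) ^ (ξ n + η n))
        = c₀ / ((A * (1 + t)) ^ 2) ^ (ξ n + η n) / (n + 1) := by rw [div_div, mul_comm]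
      _ ≤ ‖g k‖ ^ 2 / (n + 1) := by gcongr; exact hn k hk
      _ ≤ _ := hmean
  · refine sum_mul_div_sum_le (by positivity) (fun k hk => ?_) fun _ _ => by positivity
    rw [← pow_right_comm]
    exact pow_le_pow_left₀ (norm_nonneg _)
      ((hg_le k).trans (pow_le_pow_right₀ hM (le_sup (f := fun k => κ k + lam k) hk))) 2
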